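/- arXiv:2001.03546 — 5 statements merged into one kernel-verified Lean document; each statement's English description precedes it below -/
import Mathlib

section
/- Let r be the minimal positive integer such that F^r is a scalar matrix, where F is diagonalizable with eigenvalues λ_1, …, λ_{2g} satisfying λ_i λ_{i+g} = q and λ_i² = ζ_i q for r-th roots of unity ζ_i (i = 1, …, g). If n = lcm(ord(ζ_1), …, ord(ζ_g)), then n = r or n = r/2. -/
/-- Let `r` be the minimal positive integer such that `F ^ r` is a scalar matrix,
where `F` is diagonalizable with eigenvalues `λ_1, …, λ_{2g}` satisfying
`λ_i * λ_{i+g} = q` and `λ_i ^ 2 = ζ_i * q` for `r`-th roots of unity `ζ_i`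
(`i = 1, …, g`).  If `n = lcm(ord ζ_1, …, ord ζ_g)`, then `n = r` or `n = r/2`. -/
theorem lcm_orders_eq_order_or_half {K : Type*} [Field K] (g r : ℕ)
    (hg : 1 ≤ g) (hr : 0 < r)
    (F P : Matrix (Fin (2 * g)) (Fin (2 * g)) K) (q : K) (hq : q ≠ 0)
    (lam ζ : ℕ → K)
    (hP : IsUnit P.det)
    (hdiag : F = P * Matrix.diagonal (fun i : Fin (2 * g) => lam (i : ℕ)) * P⁻¹)
    (hpair : ∀ i < g, lam i * lam (i + g) = q)
    (hζroot : ∀ i < g, ζ i ^ r = 1)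
    (hζ : ∀ i < g, lam i ^ 2 = ζ i * q)
    (hscalar : ∃ α : K, F ^ r = α • (1 : Matrix (Fin (2 * g)) (Fin (2 * g)) K))
    (hmin : ∀ m, 0 < m →
      (∃ α : K, F ^ m = α • (1 : Matrix (Fin (2 * g)) (Fin (2 * g)) K)) → r ≤ m) :
    (Finset.range g).lcm (fun i => orderOf (ζ i)) = r ∨
      2 * (Finset.range g).lcm (fun i => orderOf (ζ i)) = r := by
  set n := (Finset.range g).lcm (fun i => orderOf (ζ i)) with hn
  have hndvd : n ∣ r := Finset.lcm_dvd fun i hi =>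
    orderOf_dvd_of_pow_eq_one (hζroot i (Finset.mem_range.mp hi))
  have hnpos : 0 < n := by
    rcases Nat.eq_zero_or_pos n with h | h
    · rw [h] at hndvd; omega
    · exact h
  -- key eigenvalue computation
  have key : ∀ i < g, lam i ^ (2 * n) = q ^ n := by
    intro i hi
    have hzn : ζ i ^ n = 1 := by
      have : orderOf (ζ i) ∣ n := Finset.dvd_lcm (Finset.mem_range.mpr hi)
      exact orderOf_dvd_iff_pow_eq_one.mp this
    calc lam i ^ (2 * n) = (lam i ^ 2) ^ n := by rw [← pow_mul]
    _ = (ζ i * q) ^ n := by rw [hζ i hi]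
    _ = ζ i ^ n * q ^ n := mul_pow _ _ _
    _ = q ^ n := by rw [hzn, one_mul]
  have key2 : ∀ i < g, lam (i + g) ^ (2 * n) = q ^ n := by
    intro i hi
    have h1 : (lam i * lam (i + g)) ^ (2 * n) = q ^ (2 * n) := by rw [hpair i hi]
    rw [mul_pow, key i hi] at h1
    have hqn : (q : K) ^ n ≠ 0 := pow_ne_zero _ hq
    have : q ^ n * lam (i + g) ^ (2 * n) = q ^ n * q ^ n := by
      rw [h1, ← pow_add]; ring_nf
    exact mul_left_cancel₀ hqn this
  have keyall : ∀ i : Fin (2 * g), lam (i : ℕ) ^ (2 * n) = q ^ n := by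
    intro i
    rcases lt_or_ge (i : ℕ) g with h | h
    · exact key _ h
    · have hi2 : (i : ℕ) < 2 * g := i.isLt
      have hj : (i : ℕ) - g < g := by omega
      have : (i : ℕ) - g + g = (i : ℕ) := by omega
      rw [← this]
      exact key2 _ hj
  -- conjugation power formula
  have hPP : P * P⁻¹ = 1 := Matrix.mul_nonsing_inv P hP
  have hPP' : P⁻¹ * P = 1 := Matrix.nonsing_inv_mul P hP
  set D := Matrix.diagonal (fun i : Fin (2 * g) => lam (i : ℕ)) with hD
  have hpow : ∀ m, F ^ m = P * D ^ m * P⁻¹ := by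
    intro m
    induction m with
    | zero => simp [hPP]
    | succ k ih =>
      rw [pow_succ, ih, hdiag, pow_succ]
      calc P * D ^ k * P⁻¹ * (P * D * P⁻¹)
          = P * D ^ k * (P⁻¹ * P) * D * P⁻¹ := by
            simp only [Matrix.mul_assoc]
      _ = P * (D ^ k * D) * P⁻¹ := by rw [hPP']; simp only [Matrix.mul_assoc, Matrix.one_mul]
  have hF2n : F ^ (2 * n) = (q ^ n) • (1 : Matrix (Fin (2 * g)) (Fin (2 * g)) K) := by
    have hDpow : D ^ (2 * n) = (q ^ n) • (1 : Matrix (Fin (2 * g)) (Fin (2 * g)) K) := by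
      rw [hD, Matrix.diagonal_pow]
      ext i j
      by_cases hij : i = j
      · subst hij
        simp [Matrix.diagonal_apply_eq, keyall i]
      · simp [Matrix.diagonal_apply_ne _ hij, Matrix.one_apply_ne hij]
    rw [hpow, hDpow, Matrix.mul_smul, Matrix.smul_mul, Matrix.mul_one, hPP]
  have hle : r ≤ 2 * n := hmin (2 * n) (by omega) ⟨q ^ n, hF2n⟩
  obtain ⟨k, hk⟩ := hndvd
  have hk2 : k ≤ 2 := by nlinarith
  interval_cases k <;> omega
end

section
/- With the same hypotheses as the preceding statement (quartic χ(T) = T⁴ + a₁T³ + a₂T² + a₁qT + q² with roots paired λ₁λ₃ = q, λ₂λ₄ = q, and λ₁² = ζ₁q, λ₂² = ζ₂q, η_i = ζ_i + ζ_i⁻¹ + 2), the coefficient a₁ satisfies (a₁² − (η₁ + η₂)q)² = 4η₁η₂q², i.e. a₁² = (√η₁ ± √η₂)² q for some choice of square roots. -/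
open Polynomial

/-- For a Weil-type quartic `χ(T) = T⁴ + a₁T³ + a₂T² + a₁qT + q²` over a field of
characteristic `≠ 2`, with roots paired `λ₁λ₃ = λ₂λ₄ = q ≠ 0` and `λ₁² = ζ₁q`,
`λ₂² = ζ₂q`, the coefficient `a₁` satisfies
`(a₁² − (η₁ + η₂)q)² = 4η₁η₂q²` where `η_i = ζ_i + ζ_i⁻¹ + 2`
(equivalently, `a₁² = (√η₁ ± √η₂)² q` for some choice of square roots). -/
theorem quartic_a1_relation {K : Type*} [Field K]
    (q a1 a2 l1 l2 l3 l4 z1 z2 : K)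
    (hq : q ≠ 0) (hz1 : z1 ≠ 0) (hz2 : z2 ≠ 0) (hchar : (2 : K) ≠ 0)
    (hfact : (X ^ 4 + C a1 * X ^ 3 + C a2 * X ^ 2 + C (a1 * q) * X + C (q ^ 2)
        : Polynomial K)
      = (X - C l1) * (X - C l2) * (X - C l3) * (X - C l4))
    (h13 : l1 * l3 = q) (h24 : l2 * l4 = q)
    (hl1 : l1 ^ 2 = z1 * q) (hl2 : l2 ^ 2 = z2 * q) :
    (a1 ^ 2 - ((z1 + z1⁻¹ + 2) + (z2 + z2⁻¹ + 2)) * q) ^ 2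
      = 4 * (z1 + z1⁻¹ + 2) * (z2 + z2⁻¹ + 2) * q ^ 2 := by
  have hl1ne : l1 ≠ 0 := fun h => hq (by rw [← h13, h, zero_mul])
  have hl2ne : l2 ≠ 0 := fun h => hq (by rw [← h24, h, zero_mul])
  have ha1 : a1 = -(l1 + l2 + l3 + l4) := by
    have hfact' : (X ^ 4 + C a1 * X ^ 3 + C a2 * X ^ 2 + C (a1 * q) * X + C (q ^ 2)
          : Polynomial K)
        = X^4 - C (l1+l2+l3+l4) * X^3 + C (l1*l2+l1*l3+l1*l4+l2*l3+l2*l4+l3*l4) * X^2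
          - C (l1*l2*l3+l1*l2*l4+l1*l3*l4+l2*l3*l4) * X + C (l1*l2*l3*l4) := by
      rw [hfact]; simp only [C_add, C_mul]; ring
    have h := congrArg (fun p => Polynomial.coeff p 3) hfact'
    simp only [coeff_add, coeff_sub, coeff_C_mul, coeff_X_pow, coeff_C, coeff_X] at h
    norm_num at h
    linear_combination h
  have e1 : (z1 + z1⁻¹ + 2) * q = (l1 + l3) ^ 2 := by
    have hz1inv : z1⁻¹ = q / l1 ^ 2 := by
      rw [eq_div_iff (pow_ne_zero 2 hl1ne)]
      field_simp
      linear_combination hl1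
    have hl3 : l3 = q / l1 := by rw [eq_div_iff hl1ne]; linear_combination h13
    rw [hz1inv, hl3]
    field_simp
    linear_combination -l1^2 * hl1
  have e2 : (z2 + z2⁻¹ + 2) * q = (l2 + l4) ^ 2 := by
    have hz2inv : z2⁻¹ = q / l2 ^ 2 := by
      rw [eq_div_iff (pow_ne_zero 2 hl2ne)]
      field_simp
      linear_combination hl2
    have hl4 : l4 = q / l2 := by rw [eq_div_iff hl2ne]; linear_combination h24
    rw [hz2inv, hl4]
    field_simp
    linear_combination -l2^2 * hl2
  have key : (a1 ^ 2 - ((l1+l3)^2 + (l2+l4)^2)) ^ 2 = 4 * (l1+l3)^2 * (l2+l4)^2 := by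
    rw [ha1]; ring
  calc (a1 ^ 2 - ((z1 + z1⁻¹ + 2) + (z2 + z2⁻¹ + 2)) * q) ^ 2
      = (a1 ^ 2 - ((z1 + z1⁻¹ + 2) * q + (z2 + z2⁻¹ + 2) * q)) ^ 2 := by ring
    _ = (a1 ^ 2 - ((l1+l3)^2 + (l2+l4)^2)) ^ 2 := by rw [e1, e2]
    _ = 4 * (l1+l3)^2 * (l2+l4)^2 := key
    _ = 4 * ((z1 + z1⁻¹ + 2) * q) * ((z2 + z2⁻¹ + 2) * q) := by rw [e1, e2]
    _ = 4 * (z1 + z1⁻¹ + 2) * (z2 + z2⁻¹ + 2) * q ^ 2 := by ring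
end

section
/- Let χ(T) = T⁶ + a₁T⁵ + a₂T⁴ + a₃T³ + a₂qT² + a₁q²T + q³ over a field K, with roots λ₁,…,λ₆ satisfying λ_i λ_{i+3} = q and λ_i² = ζ_i q for nonzero ζ_i (i = 1,2,3), and set η_i = ζ_i + ζ_i⁻¹ + 2. Then (a₃ − 2a₁q)² = η₁η₂η₃q³. -/
open Polynomial

/-- For a Weil-type sextic `χ(T) = T⁶ + a₁T⁵ + a₂T⁴ + a₃T³ + a₂qT² + a₁q²T + q³`
with roots paired `λᵢλ_{i+3} = q ≠ 0` and `λᵢ² = ζᵢq` for nonzero `ζᵢ`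
(`i = 1,2,3`), setting `ηᵢ = ζᵢ + ζᵢ⁻¹ + 2` one has
`(a₃ − 2a₁q)² = η₁η₂η₃q³`. -/
theorem sextic_a3_relation {K : Type*} [Field K]
    (q a1 a2 a3 l1 l2 l3 l4 l5 l6 z1 z2 z3 : K) (hq : q ≠ 0)
    (hz1 : z1 ≠ 0) (hz2 : z2 ≠ 0) (hz3 : z3 ≠ 0)
    (hfact : (X ^ 6 + C a1 * X ^ 5 + C a2 * X ^ 4 + C a3 * X ^ 3
        + C (a2 * q) * X ^ 2 + C (a1 * q ^ 2) * X + C (q ^ 3) : Polynomial K)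
      = (X - C l1) * (X - C l2) * (X - C l3) * (X - C l4) * (X - C l5) * (X - C l6))
    (h14 : l1 * l4 = q) (h25 : l2 * l5 = q) (h36 : l3 * l6 = q)
    (hl1 : l1 ^ 2 = z1 * q) (hl2 : l2 ^ 2 = z2 * q) (hl3 : l3 ^ 2 = z3 * q) :
    (a3 - 2 * a1 * q) ^ 2
      = (z1 + z1⁻¹ + 2) * (z2 + z2⁻¹ + 2) * (z3 + z3⁻¹ + 2) * q ^ 3 := by
  have expand : ((X - C l1) * (X - C l2) * (X - C l3) * (X - C l4) * (X - C l5) * (X - C l6) : Polynomial K)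
      = X^6 + C (-(l1+l2+l3+l4+l5+l6)) * X^5
        + C (l1*l2 + l1*l3 + l1*l4 + l1*l5 + l1*l6 + l2*l3 + l2*l4 + l2*l5 + l2*l6
             + l3*l4 + l3*l5 + l3*l6 + l4*l5 + l4*l6 + l5*l6) * X^4
        + C (-(l1*l2*l3 + l1*l2*l4 + l1*l2*l5 + l1*l2*l6 + l1*l3*l4 + l1*l3*l5 + l1*l3*l6
      + l1*l4*l5 + l1*l4*l6 + l1*l5*l6 + l2*l3*l4 + l2*l3*l5 + l2*l3*l6 + l2*l4*l5
      + l2*l4*l6 + l2*l5*l6 + l3*l4*l5 + l3*l4*l6 + l3*l5*l6 + l4*l5*l6)) * X^3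
        + C (l1*l2*l3*l4 + l1*l2*l3*l5 + l1*l2*l3*l6 + l1*l2*l4*l5 + l1*l2*l4*l6 + l1*l2*l5*l6
             + l1*l3*l4*l5 + l1*l3*l4*l6 + l1*l3*l5*l6 + l1*l4*l5*l6 + l2*l3*l4*l5 + l2*l3*l4*l6
             + l2*l3*l5*l6 + l2*l4*l5*l6 + l3*l4*l5*l6) * X^2
        + C (-(l1*l2*l3*l4*l5 + l1*l2*l3*l4*l6 + l1*l2*l3*l5*l6 + l1*l2*l4*l5*l6 + l1*l3*l4*l5*l6
             + l2*l3*l4*l5*l6)) * X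
        + C (l1*l2*l3*l4*l5*l6) := by
    simp only [map_add, map_mul, map_neg]
    ring
  rw [expand] at hfact
  have ha1 : a1 = -(l1+l2+l3+l4+l5+l6) := by
    have h := congrArg (fun p => Polynomial.coeff p 5) hfact
    simp only [coeff_add, coeff_C_mul, coeff_X_pow, coeff_C, coeff_X] at h
    norm_num at h
    linear_combination h
  have ha3 : a3 = -(l1*l2*l3 + l1*l2*l4 + l1*l2*l5 + l1*l2*l6 + l1*l3*l4 + l1*l3*l5 + l1*l3*l6
      + l1*l4*l5 + l1*l4*l6 + l1*l5*l6 + l2*l3*l4 + l2*l3*l5 + l2*l3*l6 + l2*l4*l5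
      + l2*l4*l6 + l2*l5*l6 + l3*l4*l5 + l3*l4*l6 + l3*l5*l6 + l4*l5*l6) := by
    have h := congrArg (fun p => Polynomial.coeff p 3) hfact
    simp only [coeff_add, coeff_C_mul, coeff_X_pow, coeff_C, coeff_X] at h
    norm_num at h
    linear_combination h
  -- roots are nonzero
  have hL1 : l1 ≠ 0 := fun h => hq (by rw [← h14, h, zero_mul])
  have hL2 : l2 ≠ 0 := fun h => hq (by rw [← h25, h, zero_mul])
  have hL3 : l3 ≠ 0 := fun h => hq (by rw [← h36, h, zero_mul])
  -- key: a3 - 2*a1*q = -(l1+l4)*(l2+l5)*(l3+l6)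
  have key : a3 - 2 * a1 * q = -((l1+l4)*(l2+l5)*(l3+l6)) := by
    rw [ha1, ha3, ← h14]
    have e25 : l2 * l5 = l1 * l4 := by rw [h14, h25]
    have e36 : l3 * l6 = l1 * l4 := by rw [h14, h36]
    linear_combination (-(l1 + l3 + l4 + l6)) * e25 + (-(l1 + l2 + l4 + l5)) * e36
  -- square of each pair sum
  have hz1q : z1 * l4 ^ 2 = q := by
    apply mul_right_cancel₀ hq
    linear_combination (-(l4^2)) * hl1 + (l1*l4+q) * h14
  have hz1inv : z1⁻¹ * q = l4 ^ 2 := by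
    rw [← hz1q, ← mul_assoc, inv_mul_cancel₀ hz1, one_mul]
  have s1 : (l1 + l4) ^ 2 = (z1 + z1⁻¹ + 2) * q := by
    linear_combination hl1 - hz1inv + 2 * h14
  have hz2q : z2 * l5 ^ 2 = q := by
    apply mul_right_cancel₀ hq
    linear_combination (-(l5^2)) * hl2 + (l2*l5+q) * h25
  have hz2inv : z2⁻¹ * q = l5 ^ 2 := by
    rw [← hz2q, ← mul_assoc, inv_mul_cancel₀ hz2, one_mul]
  have s2 : (l2 + l5) ^ 2 = (z2 + z2⁻¹ + 2) * q := by
    linear_combination hl2 - hz2inv + 2 * h25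
  have hz3q : z3 * l6 ^ 2 = q := by
    apply mul_right_cancel₀ hq
    linear_combination (-(l6^2)) * hl3 + (l3*l6+q) * h36
  have hz3inv : z3⁻¹ * q = l6 ^ 2 := by
    rw [← hz3q, ← mul_assoc, inv_mul_cancel₀ hz3, one_mul]
  have s3 : (l3 + l6) ^ 2 = (z3 + z3⁻¹ + 2) * q := by
    linear_combination hl3 - hz3inv + 2 * h36
  calc (a3 - 2 * a1 * q) ^ 2 = (l1+l4)^2 * (l2+l5)^2 * (l3+l6)^2 := by rw [key]; ring
    _ = (z1 + z1⁻¹ + 2) * (z2 + z2⁻¹ + 2) * (z3 + z3⁻¹ + 2) * q ^ 3 := by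
        rw [s1, s2, s3]; ring
end

section
/- Let M ∈ Sp₄(F_ℓ) be a block-diagonal matrix with eigenvalues γ^i, γ^{ℓi}, γ^{−i}, γ^{−ℓi} where γ is a generator of the cyclic group of order ℓ² + 1 inside F_{ℓ⁴}^× intersected with the norm-one elements (so γ has order ℓ² + 1). Then the order of M in PSp₄(F_ℓ) (the least r with M^r a scalar matrix) equals (ℓ² + 1)/(2s) where s = gcd(i, (ℓ² + 1)/2), for ℓ an odd prime. -/
open Matrix

private lemma B1_dvd_aux {i m : ℕ} (hm : 0 < m) (r : ℕ) :
    m / Nat.gcd i m ∣ r ↔ m ∣ i * r := by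
  set s := Nat.gcd i m with hs
  have hspos : 0 < s := Nat.gcd_pos_of_pos_right i hm
  have hi' : s * (i / s) = i := Nat.mul_div_cancel' (Nat.gcd_dvd_left i m)
  have hm' : s * (m / s) = m := Nat.mul_div_cancel' (Nat.gcd_dvd_right i m)
  have hco : (i / s).Coprime (m / s) := Nat.coprime_div_gcd_div_gcd hspos
  constructor
  · intro h
    have h2 : s * (m / s) ∣ s * (i / s * r) := mul_dvd_mul_left s (h.mul_left _)
    rwa [hm', ← mul_assoc, hi'] at h2
  · intro h
    have h2 : s * (m / s) ∣ s * (i / s * r) := by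
      rw [hm', ← mul_assoc, hi']; exact h
    have h3 : m / s ∣ i / s * r := (Nat.mul_dvd_mul_iff_left hspos).mp h2
    exact hco.symm.dvd_of_dvd_mul_left h3

private lemma B1_conj_pow {n R : Type*} [Fintype n] [DecidableEq n] [CommRing R]
    (P D : Matrix n n R) (hP : IsUnit P.det) (r : ℕ) :
    (P * D * P⁻¹) ^ r = P * D ^ r * P⁻¹ := by
  induction r with
  | zero => simp [Matrix.mul_nonsing_inv P hP]
  | succ k ih =>
    rw [pow_succ, pow_succ, ih]
    simp only [mul_assoc]
    rw [Matrix.nonsing_inv_mul_cancel_left P _ hP]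

/-- Srinivasan's class `B₁(i)`: let `ℓ` be an odd prime, `γ` an element of
multiplicative order `ℓ² + 1` in `F̄_ℓ`, and `M ∈ Sp₄(F_ℓ)` a semisimple matrix
whose eigenvalues (over `F̄_ℓ`) are `γ^i, γ^{ℓi}, γ^{−i}, γ^{−ℓi}`.  Then the
order of `M` in `PSp₄(F_ℓ)`, i.e. the least `r > 0` with `M^r` a scalar matrix,
equals `(ℓ² + 1)/(2s)` where `s = gcd(i, (ℓ² + 1)/2)`. -/
theorem projective_order_class_B1 (ℓ : ℕ) [Fact (Nat.Prime ℓ)] (hodd : ℓ ≠ 2)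
    (γ : AlgebraicClosure (ZMod ℓ)) (hγ : orderOf γ = ℓ ^ 2 + 1) (i : ℕ)
    (M : Matrix.symplecticGroup (Fin 2) (ZMod ℓ))
    (P : Matrix (Fin 2 ⊕ Fin 2) (Fin 2 ⊕ Fin 2) (AlgebraicClosure (ZMod ℓ)))
    (hP : IsUnit P.det)
    (hM : (M : Matrix (Fin 2 ⊕ Fin 2) (Fin 2 ⊕ Fin 2) (ZMod ℓ)).map
        (algebraMap (ZMod ℓ) (AlgebraicClosure (ZMod ℓ)))
      = P * Matrix.diagonal (Sum.elim ![γ ^ i, γ ^ (ℓ * i)] ![(γ ^ i)⁻¹, (γ ^ (ℓ * i))⁻¹])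
        * P⁻¹) :
    IsLeast {r : ℕ | 0 < r ∧ ∃ c : ZMod ℓ,
        (M : Matrix (Fin 2 ⊕ Fin 2) (Fin 2 ⊕ Fin 2) (ZMod ℓ)) ^ r = c • 1}
      ((ℓ ^ 2 + 1) / (2 * Nat.gcd i ((ℓ ^ 2 + 1) / 2))) := by
  set f : ZMod ℓ →+* AlgebraicClosure (ZMod ℓ) := algebraMap (ZMod ℓ) (AlgebraicClosure (ZMod ℓ)) with hf
  have hℓodd : Odd ℓ := (Fact.out : ℓ.Prime).odd_of_ne_two hodd
  set m : ℕ := (ℓ ^ 2 + 1) / 2 with hm_def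
  have h2m : 2 * m = ℓ ^ 2 + 1 := by
    have hdv : 2 ∣ ℓ ^ 2 + 1 := by
      obtain ⟨k, hk⟩ := hℓodd
      exact ⟨2 * k ^ 2 + 2 * k + 1, by subst hk; ring⟩
    exact Nat.mul_div_cancel' hdv
  have hℓpos : 0 < ℓ := (Fact.out : ℓ.Prime).pos
  have hm : 0 < m := by omega
  set s : ℕ := Nat.gcd i m with hs_def
  have hspos : 0 < s := Nat.gcd_pos_of_pos_right i hm
  have hgoal : (ℓ ^ 2 + 1) / (2 * Nat.gcd i ((ℓ ^ 2 + 1) / 2)) = m / s := by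
    rw [← h2m, Nat.mul_div_mul_left _ _ (by norm_num), Nat.mul_div_cancel_left m (by norm_num)]
  have hγne : γ ≠ 0 := by
    intro h
    have h1 : γ ^ (ℓ ^ 2 + 1) = 1 := hγ ▸ pow_orderOf_eq_one γ
    rw [h, zero_pow (by positivity)] at h1
    exact zero_ne_one h1
  have hinj : Function.Injective
      (fun A : Matrix (Fin 2 ⊕ Fin 2) (Fin 2 ⊕ Fin 2) (ZMod ℓ) => A.map f) := by
    intro A B h
    ext j k
    have := congrArg (fun X : Matrix (Fin 2 ⊕ Fin 2) (Fin 2 ⊕ Fin 2) (AlgebraicClosure (ZMod ℓ)) => X j k) h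
    simp only [Matrix.map_apply] at this
    exact f.injective this
  set D : Matrix (Fin 2 ⊕ Fin 2) (Fin 2 ⊕ Fin 2) (AlgebraicClosure (ZMod ℓ)) :=
    Matrix.diagonal (Sum.elim ![γ ^ i, γ ^ (ℓ * i)] ![(γ ^ i)⁻¹, (γ ^ (ℓ * i))⁻¹]) with hD
  have key : ∀ r : ℕ, (∃ c : ZMod ℓ,
      (M : Matrix (Fin 2 ⊕ Fin 2) (Fin 2 ⊕ Fin 2) (ZMod ℓ)) ^ r = c • 1) ↔ m ∣ i * r := by
    intro r
    have hpow : ((M : Matrix (Fin 2 ⊕ Fin 2) (Fin 2 ⊕ Fin 2) (ZMod ℓ)) ^ r).map f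
        = P * D ^ r * P⁻¹ := by
      rw [← RingHom.mapMatrix_apply, map_pow, RingHom.mapMatrix_apply, hM, B1_conj_pow _ _ hP]
    constructor
    · rintro ⟨c, hc⟩
      rw [hc] at hpow
      have hsm : ((c • (1 : Matrix (Fin 2 ⊕ Fin 2) (Fin 2 ⊕ Fin 2) (ZMod ℓ))).map f)
          = Matrix.diagonal (fun _ => f c) := by
        rw [Matrix.smul_one_eq_diagonal, Matrix.diagonal_map (map_zero f)]
      rw [hsm] at hpow
      have hDr : D ^ r = Matrix.diagonal (fun _ => f c) := by
        calc D ^ r = P⁻¹ * (P * D ^ r * P⁻¹) * P := by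
              rw [mul_assoc P (D ^ r) P⁻¹, Matrix.nonsing_inv_mul_cancel_left _ _ hP,
                mul_assoc, Matrix.nonsing_inv_mul _ hP, mul_one]
          _ = P⁻¹ * Matrix.diagonal (fun _ => f c) * P := by rw [← hpow]
          _ = P⁻¹ * (f c • 1) * P := by rw [Matrix.smul_one_eq_diagonal]
          _ = f c • (P⁻¹ * P) := by rw [mul_smul_comm, mul_one, smul_mul_assoc]
          _ = Matrix.diagonal (fun _ => f c) := by
              rw [Matrix.nonsing_inv_mul _ hP, Matrix.smul_one_eq_diagonal]
      rw [hD, Matrix.diagonal_pow, Matrix.diagonal_eq_diagonal_iff] at hDr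
      have h1 := hDr (Sum.inl 0)
      have h2 := hDr (Sum.inr 0)
      simp only [Pi.pow_apply, Sum.elim_inl, Sum.elim_inr, Matrix.cons_val_zero] at h1 h2
      have hir : γ ^ (i * r) = f c := by rw [← pow_mul] at h1; exact h1
      have hir' : (γ ^ (i * r))⁻¹ = f c := by
        rw [pow_mul]
        first
        | exact h2
        | (rw [← inv_pow]; exact h2)
      have h1ne : γ ^ (i * r) ≠ 0 := pow_ne_zero _ hγne
      have hone : γ ^ (2 * (i * r)) = 1 := by
        have h3 : γ ^ (i * r) * (γ ^ (i * r))⁻¹ = 1 := mul_inv_cancel₀ h1ne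
        rw [hir'] at h3
        rw [hir] at h3
        rw [two_mul, pow_add, hir]
        exact h3
      have hdvd : 2 * m ∣ 2 * (i * r) := by
        rw [h2m, ← hγ]; exact orderOf_dvd_of_pow_eq_one hone
      exact (Nat.mul_dvd_mul_iff_left (by norm_num : 0 < 2)).mp hdvd
    · intro hdvd
      have h2 : γ ^ (2 * (i * r)) = 1 := by
        apply orderOf_dvd_iff_pow_eq_one.mp
        rw [hγ, ← h2m]
        exact mul_dvd_mul_left 2 hdvd
      have hsq : (γ ^ (i * r)) ^ 2 = 1 := by rw [← pow_mul, mul_comm]; exact h2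
      have hpm : γ ^ (i * r) = 1 ∨ γ ^ (i * r) = -1 := sq_eq_one_iff.mp hsq
      obtain ⟨c, hc1, hc2, hc3⟩ : ∃ c : ZMod ℓ,
          f c = γ ^ (i * r) ∧ (f c) ^ ℓ = f c ∧ (f c)⁻¹ = f c := by
        rcases hpm with h | h
        · exact ⟨1, by simp [h], by simp [h], by simp [h]⟩
        · exact ⟨-1, by simp [h], by simp [h, hℓodd.neg_one_pow],
            by rw [map_neg, _root_.map_one]; exact _root_.inv_neg_one⟩
      refine ⟨c, hinj ?_⟩
      show ((M : Matrix (Fin 2 ⊕ Fin 2) (Fin 2 ⊕ Fin 2) (ZMod ℓ)) ^ r).map f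
        = (c • (1 : Matrix (Fin 2 ⊕ Fin 2) (Fin 2 ⊕ Fin 2) (ZMod ℓ))).map f
      have hsm : ((c • (1 : Matrix (Fin 2 ⊕ Fin 2) (Fin 2 ⊕ Fin 2) (ZMod ℓ))).map f)
          = f c • (1 : Matrix (Fin 2 ⊕ Fin 2) (Fin 2 ⊕ Fin 2) (AlgebraicClosure (ZMod ℓ))) := by
        rw [Matrix.smul_one_eq_diagonal, Matrix.diagonal_map (map_zero f),
          Matrix.smul_one_eq_diagonal]
      have hDr : D ^ r = f c • (1 : Matrix (Fin 2 ⊕ Fin 2) (Fin 2 ⊕ Fin 2) (AlgebraicClosure (ZMod ℓ))) := by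
        rw [hD, Matrix.diagonal_pow, Matrix.smul_one_eq_diagonal,
          Matrix.diagonal_eq_diagonal_iff]
        have e1 : γ ^ (i * r) = f c := hc1.symm
        have e2 : γ ^ (ℓ * i * r) = f c := by
          rw [show ℓ * i * r = i * r * ℓ by ring, pow_mul, ← hc1]; exact hc2
        rintro (j | j) <;> fin_cases j <;>
          simp only [Pi.pow_apply, Sum.elim_inl, Sum.elim_inr, Fin.mk_zero, Fin.mk_one,
            Fin.isValue, Matrix.cons_val_zero, Matrix.cons_val_one, Matrix.head_cons,
            inv_pow, ← pow_mul]
        · exact e1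
        · exact e2
        · rw [e1]; exact hc3
        · rw [e2]; exact hc3
      rw [hpow, hDr, hsm, mul_smul_comm, smul_mul_assoc, mul_one,
        Matrix.mul_nonsing_inv _ hP]
  rw [hgoal]
  constructor
  · refine ⟨Nat.div_pos (Nat.le_of_dvd hm (Nat.gcd_dvd_right i m)) hspos, ?_⟩
    exact (key _).mpr ((B1_dvd_aux hm _).mp dvd_rfl)
  · rintro r ⟨hrpos, hc⟩
    exact Nat.le_of_dvd hrpos ((B1_dvd_aux hm r).mpr ((key r).mp ⟨hc.choose, hc.choose_spec⟩))
end

section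
/- Let α be an element of order n in an abelian group (written multiplicatively) and let D = diag(α^i, α^j, α^{−i}, α^{−j}) be a diagonal matrix over a commutative ring containing α. The least positive integer r such that D^r is a scalar matrix equals n/gcd(n, i + j, i − j). -/
private theorem nt_aux (n a b r : ℕ) (hn : 0 < n) :
    (n ∣ a * r ∧ n ∣ b * r) ↔ n / Nat.gcd (Nat.gcd n a) b ∣ r := by
  rw [Nat.gcd_assoc]
  set d := Nat.gcd a b with hd
  set g := Nat.gcd n d with hg
  have hgpos : 0 < g := Nat.gcd_pos_of_pos_left d hn
  have hgn : g ∣ n := Nat.gcd_dvd_left n d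
  have hgd : g ∣ d := Nat.gcd_dvd_right n d
  have hco : Nat.Coprime (n / g) (d / g) := Nat.coprime_div_gcd_div_gcd hgpos
  constructor
  · rintro ⟨ha, hb⟩
    have hdr : n ∣ d * r := by
      have h := Nat.dvd_gcd ha hb
      rwa [Nat.gcd_mul_right] at h
    obtain ⟨k, hk⟩ := hdr
    have key : d / g * r = n / g * k := by
      apply Nat.eq_of_mul_eq_mul_left hgpos
      rw [← mul_assoc, Nat.mul_div_cancel' hgd, ← mul_assoc, Nat.mul_div_cancel' hgn, hk]
    exact hco.dvd_of_dvd_mul_left ⟨k, key⟩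
  · rintro ⟨k, rfl⟩
    have hga : g ∣ a := hgd.trans (Nat.gcd_dvd_left a b)
    have hgb : g ∣ b := hgd.trans (Nat.gcd_dvd_right a b)
    obtain ⟨ma, hma⟩ := hga
    obtain ⟨mb, hmb⟩ := hgb
    constructor
    · refine ⟨ma * k, ?_⟩
      rw [hma]
      conv_rhs => rw [← Nat.mul_div_cancel' hgn]
      ring
    · refine ⟨mb * k, ?_⟩
      rw [hmb]
      conv_rhs => rw [← Nat.mul_div_cancel' hgn]
      ring

private theorem mem_iff_aux {K : Type*} [Field K] (n : ℕ) (hn : 0 < n)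
    (α : K) (hα : orderOf α = n) (i j : ℤ) (r : ℕ) :
    (∃ c : K, (Matrix.diagonal ![α ^ i, α ^ j, α ^ (-i), α ^ (-j)]) ^ r
        = c • (1 : Matrix (Fin 4) (Fin 4) K)) ↔
      ((n : ℤ) ∣ (i + j) * r ∧ (n : ℤ) ∣ (i - j) * r) := by
  have hα1 : α ^ n = 1 := by rw [← hα]; exact pow_orderOf_eq_one α
  have hu : IsUnit α := IsUnit.of_pow_eq_one hα1 hn.ne'
  have horder : orderOf hu.unit = n := by rw [← orderOf_units, hu.unit_spec, hα]
  have hzpow : ∀ x y : ℤ, α ^ x = α ^ y ↔ (n : ℤ) ∣ y - x := by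
    intro x y
    have h1 : (hu.unit ^ x = hu.unit ^ y) ↔ (n : ℤ) ∣ y - x := by
      rw [zpow_eq_zpow_iff_modEq, horder, Int.modEq_iff_dvd]
    rw [← h1]
    constructor
    · intro h
      exact Units.ext (by simpa [Units.val_zpow_eq_zpow_val, hu.unit_spec] using h)
    · intro h
      simpa [Units.val_zpow_eq_zpow_val, hu.unit_spec] using congrArg Units.val h
  have hp : ∀ x : ℤ, (α ^ x) ^ r = α ^ (x * r) := fun x => by
    rw [← zpow_natCast (α ^ x) r, ← zpow_mul]
  constructor
  · rintro ⟨c, hc⟩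
    rw [Matrix.diagonal_pow, Matrix.smul_one_eq_diagonal, Matrix.diagonal_eq_diagonal_iff] at hc
    have h0 := hc 0
    have h1 := hc 1
    have h3 := hc 3
    simp only [Pi.pow_apply] at h0 h1 h3
    rw [show (![α ^ i, α ^ j, α ^ (-i), α ^ (-j)] : Fin 4 → K) 0 = α ^ i from rfl] at h0
    rw [show (![α ^ i, α ^ j, α ^ (-i), α ^ (-j)] : Fin 4 → K) 1 = α ^ j from rfl] at h1
    rw [show (![α ^ i, α ^ j, α ^ (-i), α ^ (-j)] : Fin 4 → K) 3 = α ^ (-j) from rfl] at h3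
    have h03 : α ^ (i * (r:ℤ)) = α ^ (-j * (r:ℤ)) := by rw [← hp, ← hp, h0, h3]
    have h01 : α ^ (i * (r:ℤ)) = α ^ (j * (r:ℤ)) := by rw [← hp, ← hp, h0, h1]
    constructor
    · have hd := (hzpow _ _).1 h03
      rw [show (i + j) * (r:ℤ) = -(-j * r - i * r) by ring]
      exact dvd_neg.mpr hd
    · have hd := (hzpow _ _).1 h01
      rw [show (i - j) * (r:ℤ) = -(j * r - i * r) by ring]
      exact dvd_neg.mpr hd
  · rintro ⟨hadd, hsub⟩
    refine ⟨α ^ (i * (r:ℤ)), ?_⟩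
    rw [Matrix.diagonal_pow, Matrix.smul_one_eq_diagonal, Matrix.diagonal_eq_diagonal_iff]
    intro k
    fin_cases k
    · show (α ^ i) ^ r = _
      exact hp i
    · show (α ^ j) ^ r = _
      rw [hp]
      exact (hzpow _ _).2 (by rw [show i * (r:ℤ) - j * r = (i - j) * r by ring]; exact hsub)
    · show (α ^ (-i)) ^ r = _
      rw [hp]
      exact (hzpow _ _).2 (by
        rw [show i * (r:ℤ) - -i * r = (i + j) * r + (i - j) * r by ring]
        exact dvd_add hadd hsub)
    · show (α ^ (-j)) ^ r = _
      rw [hp]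
      exact (hzpow _ _).2 (by rw [show i * (r:ℤ) - -j * r = (i + j) * r by ring]; exact hadd)

/-- Let `α` be a root of unity of exact order `n` in a field `K` and
`D = diag(α^i, α^j, α^{−i}, α^{−j})`.  The least positive integer `r` such that
`D^r` is a scalar matrix equals `n / gcd(n, i + j, i − j)`. -/
theorem projective_order_diagonal {K : Type*} [Field K] (n : ℕ) (hn : 0 < n)
    (α : K) (hα : orderOf α = n) (i j : ℤ) :
    IsLeast {r : ℕ | 0 < r ∧ ∃ c : K,
        (Matrix.diagonal ![α ^ i, α ^ j, α ^ (-i), α ^ (-j)]) ^ r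
          = c • (1 : Matrix (Fin 4) (Fin 4) K)}
      (n / Nat.gcd (Nat.gcd n (i + j).natAbs) (i - j).natAbs) := by
  set a := (i + j).natAbs with ha
  set b := (i - j).natAbs with hb
  have cast : ∀ (z : ℤ) (r : ℕ), ((n:ℤ) ∣ z * r) ↔ n ∣ z.natAbs * r := fun z r => by
    rw [← Int.natAbs_dvd_natAbs, Int.natAbs_mul, Int.natAbs_natCast, Int.natAbs_natCast]
  have hmem : ∀ r : ℕ, (∃ c : K, (Matrix.diagonal ![α ^ i, α ^ j, α ^ (-i), α ^ (-j)]) ^ r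
      = c • (1 : Matrix (Fin 4) (Fin 4) K)) ↔ n / Nat.gcd (Nat.gcd n a) b ∣ r := fun r => by
    rw [mem_iff_aux n hn α hα i j r, cast, cast, nt_aux n a b r hn]
  have hgdvd : Nat.gcd (Nat.gcd n a) b ∣ n :=
    (Nat.gcd_dvd_left (Nat.gcd n a) b).trans (Nat.gcd_dvd_left n a)
  have hmpos : 0 < n / Nat.gcd (Nat.gcd n a) b :=
    Nat.div_pos (Nat.le_of_dvd hn hgdvd)
      (Nat.gcd_pos_of_pos_left b (Nat.gcd_pos_of_pos_left a hn))
  constructor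
  · exact ⟨hmpos, (hmem _).2 dvd_rfl⟩
  · rintro r ⟨hr, hc⟩
    exact Nat.le_of_dvd hr ((hmem r).1 hc)
end
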